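/- arXiv:1508.01663 — 2 statements merged into one kernel-verified Lean document; each statement's English description precedes it below -/
import Mathlib

section
/- With Φ as above, for any partition λ = (λ_1,...,λ_d) and any symmetric Laurent polynomial f, Φ(∏_{i=0}^{d-1} t_i^{-i} · f · s_λ(t)) = Φ(∏_{i=0}^{d-1} t_i^{-i + λ_{i+1}} · f), where s_λ(t) is the Schur polynomial in t_0,...,t_{d-1} associated to λ. -/
open Finset

/-- `1/m!` for an integer `m`, with the convention `1/m! = 0` for `m < 0`. -/
noncomputable def invFact (m : ℤ) : ℚ := if 0 ≤ m then ((Nat.factorial m.toNat : ℕ) : ℚ)⁻¹ else 0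

/-- The constant term of `Δ(t) · exp(∑_i 1/t_i) · ∏_i t_i^{m_i}`, where
`Δ(t) = ∏_{i<j}(t_i - t_j) = ∑_σ sgn(σ) ∏_i t_i^{d-1-σ(i)}`:  expanding the exponential
series, the constant term equals `∑_σ sgn(σ) ∏_i 1/(m_i + d - 1 - σ(i))!`. -/
noncomputable def phiC (d : ℕ) (m : Fin d → ℤ) : ℚ :=
  ∑ σ : Equiv.Perm (Fin d),
    ((Equiv.Perm.sign σ : ℤ) : ℚ) * ∏ i : Fin d, invFact (m i + (d : ℤ) - 1 - ((σ i : ℕ) : ℤ))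

/-- The linear form `Φ` on the Laurent polynomial ring `A[t_0^{±1}, …, t_{d-1}^{±1}]`
(realized as `AddMonoidAlgebra A (Fin d → ℤ)`), given by
`Φ(f) = const_t(Δ(t) · exp(∑_i 1/t_i) · f(t))`; by linearity it is determined by its
values `phiC d m` on the monomials `t^m`. -/
noncomputable def Phi (A : Type*) [CommRing A] [Algebra ℚ A] (d : ℕ)
    (f : AddMonoidAlgebra A (Fin d → ℤ)) : A :=
  f.coeff.sum fun m a => phiC d m • a

/-- The action of a permutation `σ` on Laurent polynomials, with `σ(t_i) = t_{σ(i)}`. -/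
noncomputable def permL {A : Type*} [CommRing A] {d : ℕ} (σ : Equiv.Perm (Fin d))
    (f : AddMonoidAlgebra A (Fin d → ℤ)) : AddMonoidAlgebra A (Fin d → ℤ) :=
  AddMonoidAlgebra.ofCoeff (Finsupp.mapDomain (fun m : Fin d → ℤ => m ∘ σ.symm) f.coeff)

/-- The Laurent monomial `t^m = ∏_i t_i^{m_i}` with coefficient `a`. -/
noncomputable def monoL (A : Type*) [CommRing A] {d : ℕ} (m : Fin d → ℤ) (a : A) :
    AddMonoidAlgebra A (Fin d → ℤ) := AddMonoidAlgebra.single m a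

/-- The Vandermonde Laurent polynomial `Δ(t) = ∏_{0 ≤ i < j ≤ d-1}(t_i - t_j)`. -/
noncomputable def vandL (A : Type*) [CommRing A] (d : ℕ) : AddMonoidAlgebra A (Fin d → ℤ) :=
  ∏ p ∈ Finset.univ.filter (fun p : Fin d × Fin d => p.1 < p.2),
    (monoL A (fun u => if u = p.1 then 1 else 0) 1 - monoL A (fun u => if u = p.2 then 1 else 0) 1)

/-- The alternant `det[t_j^{λ_i + d - i}]_{1 ≤ i ≤ d, 0 ≤ j ≤ d-1}` (here written with
`0`-based rows: row `i` has exponents `λ_{i+1} + d - 1 - i`). -/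
noncomputable def alternantL (A : Type*) [CommRing A] (d : ℕ) (l : Fin d → ℕ) :
    AddMonoidAlgebra A (Fin d → ℤ) :=
  Matrix.det (Matrix.of fun i j : Fin d =>
    monoL A (fun u => if u = j then (l i : ℤ) + (d : ℤ) - 1 - (i : ℕ) else 0) (1 : A))

/-!
Write `L` (`constTermExp`) for the linear form `t^m ↦ ∏ᵢ 1/mᵢ!`, the constant term of
`exp(∑ᵢ 1/tᵢ) · t^m`; then `Φ(g) = L(Δ · g)`, and `L` is invariant under permuting the variables.
Multiplying by `Δ` turns the Schur polynomial into the alternant, so both sides become signed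
sums over permutations of values of `L` on monomials times `f`. Since `f` and `L` are symmetric,
the `σ`-term on the left equals the `σ⁻¹`-term on the right, because the exponents `-i` of the
prefactor and `d - 1 - i` of `Δ` differ by a constant.
-/

noncomputable def constTermExp (A : Type*) [CommRing A] [Algebra ℚ A] (d : ℕ) :
    AddMonoidAlgebra A (Fin d → ℤ) →ₗ[A] A :=
  Finsupp.lsum A (fun m : Fin d → ℤ => (∏ i, invFact (m i)) • LinearMap.id) ∘ₗ
    (AddMonoidAlgebra.coeffLinearEquiv A).toLinearMap

section

variable {A : Type*} [CommRing A] {d : ℕ}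

lemma constTermExp_single [Algebra ℚ A] (m : Fin d → ℤ) (a : A) :
    constTermExp A d (AddMonoidAlgebra.single m a) = (∏ i, invFact (m i)) • a := by
  simp [constTermExp]

lemma permL_single (σ : Equiv.Perm (Fin d)) (m : Fin d → ℤ) (a : A) :
    permL σ (AddMonoidAlgebra.single m a) = AddMonoidAlgebra.single (m ∘ σ.symm) a :=
  AddMonoidAlgebra.mapDomain_single

lemma permL_mul (σ : Equiv.Perm (Fin d)) (g h : AddMonoidAlgebra A (Fin d → ℤ)) :
    permL σ (g * h) = permL σ g * permL σ h :=
  AddMonoidAlgebra.mapDomain_mul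
    (AddMonoidHom.mk' (fun m : Fin d → ℤ => m ∘ σ.symm) fun _ _ => rfl) g h

lemma constTermExp_permL [Algebra ℚ A] (σ : Equiv.Perm (Fin d))
    (g : AddMonoidAlgebra A (Fin d → ℤ)) :
    constTermExp A d (permL σ g) = constTermExp A d g := by
  induction g using AddMonoidAlgebra.induction_linear with
  | zero => simp [permL]
  | add g h hg hh =>
    rw [show permL σ (g + h) = permL σ g + permL σ h from AddMonoidAlgebra.mapDomain_add _ _ _,
      map_add, map_add, hg, hh]
  | single m a =>
    rw [permL_single, constTermExp_single, constTermExp_single]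
    exact congrArg (· • a) (Equiv.prod_comp σ.symm fun i => invFact (m i))

lemma constTermExp_single_comp_mul [Algebra ℚ A] {f : AddMonoidAlgebra A (Fin d → ℤ)}
    (hf : ∀ σ : Equiv.Perm (Fin d), permL σ f = f) (σ : Equiv.Perm (Fin d))
    (m : Fin d → ℤ) (a : A) :
    constTermExp A d (AddMonoidAlgebra.single (m ∘ σ) a * f) =
      constTermExp A d (AddMonoidAlgebra.single m a * f) := by
  rw [← constTermExp_permL σ, permL_mul, permL_single, hf, Function.comp_assoc,
    Equiv.self_comp_symm, Function.comp_id]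

lemma det_of_single_piSingle (e : Fin d → ℤ) :
    (Matrix.of fun i j : Fin d => AddMonoidAlgebra.single (Pi.single j (e i)) (1 : A)).det =
      ∑ σ : Equiv.Perm (Fin d),
        (Equiv.Perm.sign σ : ℤ) • AddMonoidAlgebra.single (e ∘ σ) (1 : A) := by
  rw [Matrix.det_apply]
  refine Finset.sum_congr rfl fun σ _ => ?_
  rw [Units.smul_def]
  simp only [Matrix.of_apply, AddMonoidAlgebra.prod_single, Finset.prod_const_one]
  rw [Finset.univ_sum_single fun i => e (σ i)]
  rfl

lemma prod_sub_eq_det_pow_rev {R : Type*} [CommRing R] (x : Fin d → R) :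
    ∏ p ∈ univ.filter (fun p : Fin d × Fin d => p.1 < p.2), (x p.1 - x p.2) =
      (Matrix.of fun i j : Fin d => x j ^ (i.rev : ℕ)).det := by
  have hV : (Matrix.of fun i j : Fin d => x j ^ (i.rev : ℕ)) =
      (Matrix.vandermonde (x ∘ Fin.rev)).transpose.submatrix Fin.revPerm Fin.revPerm := by
    ext i j
    simp
  rw [hV, Matrix.det_submatrix_equiv_self, Matrix.det_transpose, Matrix.det_vandermonde]
  simp only [← Finset.filter_lt_eq_Ioi, Finset.prod_filter]
  rw [← Fintype.prod_prod_type']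
  refine Fintype.prod_equiv ((Equiv.prodComm _ _).trans (Fin.revPerm.prodCongr Fin.revPerm)) _ _
    fun p => ?_
  simp [Fin.rev_lt_rev]

lemma vandL_eq_sum_sign : vandL A d = ∑ σ : Equiv.Perm (Fin d),
    (Equiv.Perm.sign σ : ℤ) •
      AddMonoidAlgebra.single (fun u : Fin d => (d : ℤ) - 1 - (σ u : ℕ)) (1 : A) := by
  have hpow (i j : Fin d) : monoL A (Pi.single j 1) 1 ^ (i.rev : ℕ) =
      AddMonoidAlgebra.single (Pi.single j ((d : ℤ) - 1 - (i : ℕ))) 1 := by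
    rw [monoL, AddMonoidAlgebra.single_pow, one_pow]
    congr 1
    funext u
    rcases eq_or_ne u j with rfl | hu
    · simp only [Pi.smul_apply, Pi.single_eq_same, nsmul_eq_mul, mul_one, Fin.val_rev]
      omega
    · simp [hu]
  simp only [vandL, ← Pi.single_apply]
  rw [prod_sub_eq_det_pow_rev fun j => monoL A (Pi.single j 1) 1]
  simp only [hpow]
  exact det_of_single_piSingle fun i : Fin d => (d : ℤ) - 1 - (i : ℕ)

lemma alternantL_eq_sum_sign (l : Fin d → ℕ) : alternantL A d l = ∑ σ : Equiv.Perm (Fin d),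
    (Equiv.Perm.sign σ : ℤ) • AddMonoidAlgebra.single
      (fun u : Fin d => (l (σ u) : ℤ) + (d : ℤ) - 1 - (σ u : ℕ)) (1 : A) := by
  refine (congrArg Matrix.det ?_).trans
    (det_of_single_piSingle fun i : Fin d => (l i : ℤ) + (d : ℤ) - 1 - (i : ℕ))
  ext i j : 2
  simp only [Matrix.of_apply, monoL, ← Pi.single_apply]

lemma Phi_single [Algebra ℚ A] (m : Fin d → ℤ) (a : A) :
    Phi A d (AddMonoidAlgebra.single m a) = phiC d m • a :=
  Finsupp.sum_single_index (smul_zero _)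

lemma Phi_add [Algebra ℚ A] (g h : AddMonoidAlgebra A (Fin d → ℤ)) :
    Phi A d (g + h) = Phi A d g + Phi A d h :=
  Finsupp.sum_add_index (fun _ _ => smul_zero _) fun _ _ _ _ => smul_add _ _ _

lemma Phi_eq_constTermExp_vandL_mul [Algebra ℚ A] (g : AddMonoidAlgebra A (Fin d → ℤ)) :
    Phi A d g = constTermExp A d (vandL A d * g) := by
  induction g using AddMonoidAlgebra.induction_linear with
  | zero => simp [Phi]
  | add g h hg hh => rw [Phi_add, hg, hh, mul_add, map_add]
  | single m a =>
    simp only [Phi_single, phiC, vandL_eq_sum_sign, Finset.sum_mul, smul_mul_assoc,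
      AddMonoidAlgebra.single_mul_single, one_mul, map_sum, map_zsmul, constTermExp_single,
      Finset.sum_smul, mul_smul, Int.cast_smul_eq_zsmul]
    refine Finset.sum_congr rfl fun σ _ => ?_
    congr 2
    refine Finset.prod_congr rfl fun i _ => ?_
    rw [Pi.add_apply]
    congr 1
    ring

end

theorem Phi_mul_schur_general (A : Type*) [CommRing A] [Algebra ℚ A] (d : ℕ)
    (l : Fin d → ℕ)
    (f S : AddMonoidAlgebra A (Fin d → ℤ))
    (hf : ∀ σ : Equiv.Perm (Fin d), permL σ f = f)
    (hS : vandL A d * S = alternantL A d l) :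
    Phi A d (monoL A (fun i : Fin d => -((i : ℕ) : ℤ)) 1 * f * S) =
      Phi A d (monoL A (fun i : Fin d => -((i : ℕ) : ℤ) + (l i : ℤ)) 1 * f) := by
  have hΔ : vandL A d * (monoL A (fun i : Fin d => -((i : ℕ) : ℤ)) 1 * f * S) =
      monoL A (fun i : Fin d => -((i : ℕ) : ℤ)) 1 * f * alternantL A d l := by
    rw [← hS]
    ring
  rw [Phi_eq_constTermExp_vandL_mul, Phi_eq_constTermExp_vandL_mul, hΔ, alternantL_eq_sum_sign,
    vandL_eq_sum_sign, Finset.mul_sum, Finset.sum_mul]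
  simp only [mul_smul_comm, smul_mul_assoc, map_sum, map_zsmul, monoL, mul_right_comm _ f,
    ← mul_assoc, AddMonoidAlgebra.single_mul_single, one_mul]
  refine Fintype.sum_bijective _ inv_involutive.bijective _ _ fun σ => ?_
  rw [Equiv.Perm.sign_inv]
  conv_rhs => rw [← constTermExp_single_comp_mul hf σ]
  congr 4
  funext u
  simp only [Pi.add_apply, Function.comp_apply, Equiv.Perm.inv_def, Equiv.symm_apply_apply]
  ring

/-- For a partition `λ = (λ_1, …, λ_d)` and a symmetric Laurent polynomial `f`,
`Φ(∏_i t_i^{-i} · f · s_λ(t)) = Φ(∏_i t_i^{-i+λ_{i+1}} · f)`, where the Schur polynomial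
`s_λ(t)` is characterized by `Δ(t) · s_λ(t) = det[t_j^{λ_i + d - i}]`. -/
theorem Phi_mul_schur (A : Type*) [CommRing A] [Algebra ℚ A] (d : ℕ)
    (l : Fin d → ℕ) (hl : Antitone l)
    (f S : AddMonoidAlgebra A (Fin d → ℤ))
    (hf : ∀ σ : Equiv.Perm (Fin d), permL σ f = f)
    (hS : vandL A d * S = alternantL A d l) :
    Phi A d (monoL A (fun i : Fin d => -((i : ℕ) : ℤ)) 1 * f * S) =
      Phi A d (monoL A (fun i : Fin d => -((i : ℕ) : ℤ) + (l i : ℤ)) 1 * f) :=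
  Phi_mul_schur_general A d l f S hf hS
end

section
/- Let k_0,...,k_{d-1} be nonnegative integers and r ≥ d. Then Φ(∏_{i=0}^{d-1} t_i^{r - d + k_i - i}) = (-1)^{d(d-1)/2}·∏_{0≤i<j≤d-1}((k_i - i) - (k_j - j)) / ∏_{i=0}^{d-1}(r + k_i - i - 1)!, where Φ(f) = const_t(Δ(t)·exp(∑_i 1/t_i)·f) and 1/m! = 0 for m < 0. -/
open Finset

/-! Expanding `Δ(t) = ∑_σ sgn σ ∏_i t_i^{d-1-σ(i)}` and `exp(∑ 1/t_i)` turns `Φ(t^m)` into the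
determinant `det [1/(N_i - j)!]` with `N_i = m_i + d - 1`. Since `1/(N - j)! = N^{\underline{j}}/N!`
and the falling factorials `x^{\underline{j}}` are monic of degree `j`, row operations
reduce it to `∏_i 1/N_i!` times the Vandermonde determinant of the `N_i`; for the shifted
monomial `N_i - N_j = (k_i - i) - (k_j - j)`. -/

open Finset Matrix

lemma Phi_monoL {A : Type*} [CommRing A] [Algebra ℚ A] (d : ℕ) (m : Fin d → ℤ) (a : A) :
    Phi A d (monoL A m a) = phiC d m • a :=
  Finsupp.sum_single_index (smul_zero _)

lemma phiC_eq_det (d : ℕ) (m : Fin d → ℤ) :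
    phiC d m = det (of fun j i : Fin d => invFact (m i + d - 1 - (j : ℕ))) := by
  simp only [phiC, det_apply, of_apply, Units.smul_def, zsmul_eq_mul]

lemma invFact_natCast (N : ℕ) : invFact N = (N.factorial : ℚ)⁻¹ := by
  simp [invFact]

lemma invFact_natCast_sub (N j : ℕ) : invFact ((N : ℤ) - j) = invFact N * N.descFactorial j := by
  rw [invFact_natCast]
  rcases le_or_gt j N with hjN | hNj
  · rw [← Nat.cast_sub hjN, invFact_natCast, ← Nat.factorial_mul_descFactorial hjN]
    push_cast
    field_simp [(N - j).factorial_ne_zero, (Nat.descFactorial_pos.mpr hjN).ne']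
  · rw [invFact, if_neg (by omega), Nat.descFactorial_eq_zero_iff_lt.mpr hNj]
    simp

lemma det_descFactorial_eq_det_vandermonde {R : Type*} [CommRing R] [IsDomain R] {d : ℕ}
    (N : Fin d → ℕ) :
    det (of fun j i : Fin d => ((N i).descFactorial j : R)) =
      det (vandermonde fun i => (N i : R)) := by
  rw [det_eval_matrixOfPolynomials_eq_det_vandermonde _
    (fun j => descPochhammer R j) (fun j => descPochhammer_natDegree R j)
    (fun j => monic_descPochhammer R j), ← det_transpose]
  congr
  ext i j
  simp [descPochhammer_eval_eq_descFactorial]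

lemma det_invFact_natCast_sub {d : ℕ} (N : Fin d → ℕ) :
    det (of fun j i : Fin d => invFact ((N i : ℤ) - (j : ℕ))) =
      (∏ i, invFact (N i)) * det (vandermonde fun i => (N i : ℚ)) := by
  simp only [invFact_natCast_sub]
  rw [← det_descFactorial_eq_det_vandermonde, ← det_mul_row]
  rfl

lemma phiC_natCast_add_one_sub {d : ℕ} (N : Fin d → ℕ) :
    phiC d (fun i => (N i : ℤ) + 1 - d) =
      (∏ i, invFact (N i)) * det (vandermonde fun i => (N i : ℚ)) := by
  rw [phiC_eq_det, ← det_invFact_natCast_sub]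
  congr 2
  ext j i
  ring_nf

lemma sum_fin_val (d : ℕ) : ∑ i : Fin d, (i : ℕ) = d * (d - 1) / 2 := by
  rw [Fin.sum_univ_eq_sum_range (fun i => i), sum_range_id]

lemma det_vandermonde_neg {R : Type*} [CommRing R] {d : ℕ} (v : Fin d → R) :
    det (vandermonde (-v)) = (-1) ^ (d * (d - 1) / 2) * det (vandermonde v) := by
  have hneg : vandermonde (-v) = of fun i j : Fin d => (-1 : R) ^ (j : ℕ) * vandermonde v i j :=
    Matrix.ext fun i j => neg_pow (v i) j
  rw [hneg, det_mul_row (fun j : Fin d => (-1 : R) ^ (j : ℕ)) (vandermonde v), prod_pow_eq_pow_sum,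
    sum_fin_val]

lemma det_vandermonde_eq_neg_one_pow_mul {R : Type*} [CommRing R] {d : ℕ} (v : Fin d → R) :
    det (vandermonde v) = (-1) ^ (d * (d - 1) / 2) * ∏ i, ∏ j ∈ Ioi i, (v i - v j) := by
  have h := det_vandermonde_neg v
  rw [det_vandermonde (-v)] at h
  simp only [Pi.neg_apply, neg_sub_neg] at h
  rw [h, ← mul_assoc, ← pow_add, ← two_mul, pow_mul, neg_one_sq, one_pow, one_mul]

lemma prod_filter_lt_eq_prod_prod_Ioi {α M : Type*} [Fintype α] [LinearOrder α]
    [LocallyFiniteOrderTop α] [CommMonoid M] (f : α → α → M) :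
    ∏ p ∈ univ.filter (fun p : α × α => p.1 < p.2), f p.1 p.2 = ∏ i, ∏ j ∈ Ioi i, f i j := by
  rw [prod_filter, Fintype.prod_prod_type]
  refine prod_congr rfl fun i _ => ?_
  rw [← prod_filter, filter_lt_eq_Ioi]

/-- For nonnegative integers `k_0, …, k_{d-1}` and `r ≥ d`,
`Φ(∏_i t_i^{r-d+k_i-i}) = (-1)^{d(d-1)/2} · ∏_{i<j}((k_i - i) - (k_j - j)) / ∏_i (r + k_i - i - 1)!`
(with `1/m! = 0` for `m < 0`). -/
theorem Phi_shifted_monomial (d r : ℕ) (hdr : d ≤ r) (k : Fin d → ℕ) :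
    Phi ℚ d (monoL ℚ (fun i : Fin d => (r : ℤ) - d + k i - (i : ℕ)) 1) =
      (-1) ^ (d * (d - 1) / 2) *
        (∏ p ∈ Finset.univ.filter (fun p : Fin d × Fin d => p.1 < p.2),
          (((k p.1 : ℚ) - (p.1 : ℕ)) - ((k p.2 : ℚ) - (p.2 : ℕ)))) *
        ∏ i : Fin d, invFact ((r : ℤ) + k i - (i : ℕ) - 1) := by
  set N : Fin d → ℕ := fun i => r + k i - (i + 1) with hN
  have hNint (i : Fin d) : (N i : ℤ) = r + k i - (i : ℕ) - 1 := by
    have := i.isLt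
    simp only [hN]
    omega
  have hm : (fun i : Fin d => (r : ℤ) - d + k i - (i : ℕ)) = fun i => (N i : ℤ) + 1 - d := by
    ext i
    rw [hNint]
    ring
  have hdiff (i j : Fin d) : (N i : ℚ) - N j = ((k i : ℚ) - (i : ℕ)) - ((k j : ℚ) - (j : ℕ)) := by
    have hNrat (l : Fin d) : (N l : ℚ) = r + k l - (l : ℕ) - 1 := by exact_mod_cast hNint l
    rw [hNrat, hNrat]
    ring
  rw [Phi_monoL, smul_eq_mul, mul_one, hm, phiC_natCast_add_one_sub,
    det_vandermonde_eq_neg_one_pow_mul,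
    prod_filter_lt_eq_prod_prod_Ioi fun i j : Fin d => ((k i : ℚ) - (i : ℕ)) - ((k j : ℚ) - (j : ℕ))]
  simp only [← hNint, hdiff]
  ring
end
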